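/- arXiv:1910.01876 — 3 statements merged into one kernel-verified Lean document; each statement's English description precedes it below -/
import Mathlib

section
/- For all integers n ≥ 0 and r ≥ 1, the derivative at x = 0 of the real function x ↦ (1/n!) · ∏_{i=0}^{n−1} (x + r + i) (that is, x ↦ binom(x+n+r−1, n) as a polynomial in x) equals the hyperharmonic number h_n^{(r)}. -/
/-!
As a function of `(n, r)`, `binom(x + n + r - 1, n)` satisfies Pascal's rule, which the
hyperharmonic numbers mirror as `h_{n+1}^{(r+1)} = h_n^{(r+1)} + h_{n+1}^{(r)}`; by a double
induction it suffices to match the derivatives at `0` on the boundary. For `n = 0` both sides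
vanish, and for `r = 0` the polynomial is `x / n` times `binom(x + n - 1, n - 1)`, which is `1`
at `x = 0`, so its derivative there is `1 / n = h_n^{(0)}`.
-/

open Finset Nat

/-- The hyperharmonic numbers: `hyperharmonic n 0 = 1/n`, `hyperharmonic 0 r = 0`,
and `hyperharmonic n r = ∑_{k=1}^{n} hyperharmonic k (r-1)` for `r ≥ 1`. -/
noncomputable def hyperharmonic : ℕ → ℕ → ℝ
  | n, 0 => 1 / n
  | n, (r + 1) => ∑ k ∈ Finset.Icc 1 n, hyperharmonic k r
  termination_by n r => r

lemma hyperharmonic_zero_right (n : ℕ) : hyperharmonic n 0 = 1 / n := by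
  rw [hyperharmonic]

lemma hyperharmonic_zero_succ (r : ℕ) : hyperharmonic 0 (r + 1) = 0 := by
  simp [hyperharmonic]

lemma hyperharmonic_succ_succ (n r : ℕ) :
    hyperharmonic (n + 1) (r + 1) = hyperharmonic n (r + 1) + hyperharmonic (n + 1) r := by
  rw [hyperharmonic, hyperharmonic, sum_Icc_succ_top (by omega)]

/-- `risingBinom n r x = binom(x + n + r - 1, n)`. -/
noncomputable def risingBinom (n r : ℕ) : ℝ → ℝ := fun x =>
  (1 / (n ! : ℝ)) * ∏ i ∈ range n, (x + (r : ℝ) + (i : ℝ))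

lemma risingBinom_zero_left (r : ℕ) : risingBinom 0 r = fun _ => 1 := by
  funext x
  simp [risingBinom]

lemma risingBinom_one_apply_zero (n : ℕ) : risingBinom n 1 0 = 1 := by
  have h : ∏ i ∈ range n, ((0 : ℝ) + (1 : ℕ) + i) = n ! := by
    rw [← prod_range_add_one_eq_factorial]
    push_cast
    exact prod_congr rfl fun i _ => by ring
  simp only [risingBinom, h]
  field_simp

lemma risingBinom_succ_zero (n : ℕ) (x : ℝ) :
    risingBinom (n + 1) 0 x = x / (n + 1) * risingBinom n 1 x := by
  simp only [risingBinom, prod_range_succ', factorial_succ]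
  push_cast
  field_simp
  rw [add_zero, add_zero, mul_comm]
  exact congrArg _ (prod_congr rfl fun i _ => by ring)

lemma risingBinom_succ_succ (n r : ℕ) (x : ℝ) :
    risingBinom (n + 1) (r + 1) x = risingBinom n (r + 1) x + risingBinom (n + 1) r x := by
  have h_shift : ∏ i ∈ range (n + 1), (x + r + i) = (∏ i ∈ range n, (x + (r + 1) + i)) * (x + r) := by
    rw [prod_range_succ']
    push_cast
    simp only [add_zero, add_assoc, add_comm (1 : ℝ)]
  simp only [risingBinom, factorial_succ]
  push_cast
  rw [h_shift, prod_range_succ]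
  field_simp
  ring

lemma differentiable_risingBinom (n r : ℕ) : Differentiable ℝ (risingBinom n r) := by
  unfold risingBinom
  fun_prop

lemma hasDerivAt_risingBinom_zero_right (n : ℕ) :
    HasDerivAt (risingBinom n 0) (1 / n) 0 := by
  cases n with
  | zero => simpa [risingBinom_zero_left] using hasDerivAt_const (0 : ℝ) (1 : ℝ)
  | succ n =>
    have hx : HasDerivAt (fun x : ℝ => x / (n + 1)) (1 / (n + 1)) 0 :=
      (hasDerivAt_id 0).div_const _
    have := hx.fun_mul (differentiable_risingBinom n 1 0).hasDerivAt
    rw [funext (risingBinom_succ_zero n)]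
    simpa [risingBinom_one_apply_zero] using this

theorem hasDerivAt_risingBinom (n r : ℕ) :
    HasDerivAt (risingBinom n r) (hyperharmonic n r) 0 := by
  induction r generalizing n with
  | zero => simpa [hyperharmonic_zero_right] using hasDerivAt_risingBinom_zero_right n
  | succ r ihr =>
    induction n with
    | zero =>
      rw [risingBinom_zero_left, hyperharmonic_zero_succ]
      exact hasDerivAt_const _ _
    | succ n ihn =>
      rw [funext (risingBinom_succ_succ n r), hyperharmonic_succ_succ]
      exact ihn.add (ihr (n + 1))

theorem deriv_binomial_eq_hyperharmonic_general (n r : ℕ) :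
    deriv (fun x : ℝ => (1 / (Nat.factorial n : ℝ)) *
        ∏ i ∈ Finset.range n, (x + (r : ℝ) + (i : ℝ))) 0 = hyperharmonic n r :=
  (hasDerivAt_risingBinom n r).deriv

theorem deriv_binomial_eq_hyperharmonic (n r : ℕ) (hr : 1 ≤ r) :
    deriv (fun x : ℝ => (1 / (Nat.factorial n : ℝ)) *
        ∏ i ∈ Finset.range n, (x + (r : ℝ) + (i : ℝ))) 0 = hyperharmonic n r :=
  deriv_binomial_eq_hyperharmonic_general n r
end

section
/- For all integers k ≥ 2 and n ≥ 0, ∑_{i=0}^{k} (−1)^{i}·binom(k,i)·(n+i)·H_{n+i} = (k−2)! / ((n+1)(n+2)⋯(n+k−1)), i.e. the alternating binomial sum of (n+i)·H_{n+i} equals (k−2)!/((n+1)^{\overline{k−1}}). -/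
/-!
The alternating sum `∑ (-1)^i binom(k,i) f(n+i)` is `(-1)^k Δ^k f(n)` for the forward difference
`Δ`. For `f(x) = x H_x` one has `Δf = H_x + 1` and `Δ²f = 1/(x+1)`, and the iterated differences
of `1/(x+1)` are `Δ^j (1/(x+1)) = (-1)^j j! / ((x+1)(x+2)⋯(x+j+1))`, so the two signs cancel.
-/

open Finset fwdDiff

lemma alternating_choose_sum_eq_fwdDiff_iter {R : Type*} [CommRing R] (f : ℕ → R) (k n : ℕ) :
    ∑ i ∈ range (k + 1), (-1 : R) ^ i * k.choose i * f (n + i) =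
      (-1) ^ k * (Δ_[1])^[k] f n := by
  rw [fwdDiff_iter_eq_sum_shift, mul_sum]
  refine sum_congr rfl fun i hi => ?_
  obtain ⟨d, rfl⟩ := Nat.exists_eq_add_of_le (Nat.lt_succ_iff.mp (mem_range.mp hi))
  simp only [Nat.add_sub_cancel_left, nsmul_eq_mul, mul_one, zsmul_eq_mul]
  push_cast
  have hd : (-1 : R) ^ d * (-1) ^ d = 1 := by rw [← pow_add, Even.neg_one_pow ⟨d, rfl⟩]
  linear_combination (-((-1 : R) ^ i * (i + d).choose i * f (n + i))) * hd

lemma fwdDiff_harmonic :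
    Δ_[1] (fun x : ℕ => (harmonic x : ℚ)) = fun x : ℕ => ((x : ℚ) + 1)⁻¹ := by
  ext x
  simp [fwdDiff, harmonic_succ]

lemma fwdDiff_mul_harmonic :
    Δ_[1] (fun x : ℕ => (x : ℚ) * harmonic x) = fun x => harmonic x + 1 := by
  ext x
  have hx : (x : ℚ) + 1 ≠ 0 := by positivity
  simp only [fwdDiff, harmonic_succ, Nat.cast_add, Nat.cast_one]
  field_simp
  ring

lemma fwdDiff_iter_two_mul_harmonic :
    (Δ_[1])^[2] (fun x : ℕ => (x : ℚ) * harmonic x) = fun x : ℕ => ((x : ℚ) + 1)⁻¹ := by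
  rw [Function.iterate_succ_apply', Function.iterate_one, fwdDiff_mul_harmonic]
  ext x
  simpa only [fwdDiff, add_sub_add_right_eq_sub] using congrFun fwdDiff_harmonic x

lemma fwdDiff_iter_inv_add_one {K : Type*} [Field K] [CharZero K] (j : ℕ) :
    (Δ_[1])^[j] (fun x : ℕ => ((x : K) + 1)⁻¹) =
      fun n : ℕ => (-1) ^ j * (j.factorial : K) / ∏ i ∈ range (j + 1), ((n : K) + 1 + i) := by
  induction j with
  | zero => ext n; simp
  | succ j ih =>
    ext n
    rw [Function.iterate_succ_apply', ih]
    have hshift : ∀ m, ∏ i ∈ range (m + 1), ((n : K) + 1 + i) =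
        ((n : K) + 1) * ∏ i ∈ range m, (((n + 1 : ℕ) : K) + 1 + i) := fun m => by
      rw [prod_range_succ', mul_comm]
      push_cast
      ring_nf
    simp only [fwdDiff]
    rw [hshift (j + 1), hshift j, prod_range_succ _ j]
    have hn : (n : K) + 1 ≠ 0 := n.cast_add_one_ne_zero
    have hQ : ∏ i ∈ range j, (((n + 1 : ℕ) : K) + 1 + i) ≠ 0 :=
      prod_ne_zero_iff.mpr fun i _ => by norm_cast; omega
    have hl : ((n + 1 : ℕ) : K) + 1 + j ≠ 0 := by norm_cast; omega
    rw [Nat.factorial_succ]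
    push_cast at hQ hl ⊢
    field_simp
    ring

theorem alternating_binomial_sum_mul_harmonic_shifted (k n : ℕ) (hk : 2 ≤ k) :
    ∑ i ∈ Finset.range (k + 1),
        (-1 : ℚ) ^ i * (Nat.choose k i : ℚ) * ((n : ℚ) + i) * harmonic (n + i) =
      (Nat.factorial (k - 2) : ℚ) / ∏ j ∈ Finset.range (k - 1), ((n : ℚ) + 1 + j) := by
  obtain ⟨m, rfl⟩ : ∃ m, k = m + 2 := ⟨k - 2, by omega⟩
  have hsum :=
    alternating_choose_sum_eq_fwdDiff_iter (fun x : ℕ => (x : ℚ) * harmonic x) (m + 2) n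
  rw [Function.iterate_add_apply, fwdDiff_iter_two_mul_harmonic, fwdDiff_iter_inv_add_one] at hsum
  beta_reduce at hsum
  rw [← mul_div_assoc, ← mul_assoc, ← pow_add, Even.neg_one_pow ⟨m + 1, by ring⟩, one_mul]
    at hsum
  rw [Nat.add_sub_cancel, show m + 2 - 1 = m + 1 from rfl, ← hsum]
  refine sum_congr rfl fun i _ => ?_
  push_cast
  ring
end

section
/- For every integer n ≥ 2, ∑_{i=1}^{n−1} (−1)^{i+1}·binom(n+1, i+1)·H_i equals 2·H_n if n is even, and equals 0 if n is odd. -/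
/-!
Write `S_m(a) = ∑ⱼ (-1)ʲ C(m, j) aⱼ`. Pascal's rule gives `S_{m+1}(a) = S_m(j ↦ aⱼ - aⱼ₊₁)`, which
turns harmonic numbers into reciprocals: `S_{m+1}(j ↦ H_{j-1}) = -S_m(j ↦ 1/j) = H_m`, the last
step by induction on `m` using the absorption identity `S_m(j ↦ 1/(j+1)) = 1/(m+1)`. The sum in the
theorem is `S_{n+1}(j ↦ H_{j-1})` without its last term `(-1)^{n+1} H_n`, hence `(1 + (-1)ⁿ) H_n`.
-/

open Finset

section AltBinomialSum

variable {R : Type*} [CommRing R]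

def altBinomialSum (a : ℕ → R) (m : ℕ) : R :=
  ∑ j ∈ range (m + 1), (-1) ^ j * m.choose j * a j

theorem altBinomialSum_sub (a b : ℕ → R) (m : ℕ) :
    altBinomialSum (fun j => a j - b j) m = altBinomialSum a m - altBinomialSum b m := by
  simp only [altBinomialSum, mul_sub, sum_sub_distrib]

theorem altBinomialSum_neg (a : ℕ → R) (m : ℕ) :
    altBinomialSum (fun j => -a j) m = -altBinomialSum a m := by
  simp only [altBinomialSum, mul_neg, sum_neg_distrib]

theorem altBinomialSum_succ (a : ℕ → R) (m : ℕ) :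
    altBinomialSum a (m + 1) = altBinomialSum (fun j => a j - a (j + 1)) m := by
  rw [altBinomialSum_sub]
  calc altBinomialSum a (m + 1)
      = ∑ j ∈ range (m + 2), ((m + 1).choose j : R) * ((-1) ^ j * a j) :=
        sum_congr rfl fun _ _ => by ring
    _ = ∑ j ∈ range (m + 1), (m.choose j : R) * ((-1) ^ j * a j) +
          ∑ j ∈ range (m + 1), (m.choose j : R) * ((-1) ^ (j + 1) * a (j + 1)) :=
        sum_choose_succ_mul (fun j _ => (-1) ^ j * a j) m
    _ = _ := by
      rw [sub_eq_add_neg, altBinomialSum, altBinomialSum, ← sum_neg_distrib]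
      congr 1 <;> exact sum_congr rfl fun _ _ => by ring

end AltBinomialSum

theorem altBinomialSum_inv_add_one {K : Type*} [Field K] [CharZero K] (m : ℕ) :
    altBinomialSum (fun j => ((j : K) + 1)⁻¹) m = ((m : K) + 1)⁻¹ := by
  have absorb (j : ℕ) : (m.choose j : K) * ((j : K) + 1)⁻¹ * ((m : K) + 1) =
      (m + 1).choose (j + 1) := by
    rw [mul_right_comm, ← div_eq_mul_inv, div_eq_iff (Nat.cast_add_one_ne_zero j), mul_comm]
    exact_mod_cast Nat.add_one_mul_choose_eq m j
  have alt : ∑ j ∈ range (m + 1), (-1 : ℤ) ^ j * (m + 1).choose (j + 1) = 1 := by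
    have h := Int.alternating_sum_range_choose_of_ne (Nat.succ_ne_zero m)
    rw [sum_range_succ'] at h
    simp only [pow_succ, mul_neg_one, neg_mul, sum_neg_distrib, pow_zero,
      Nat.choose_zero_right, Nat.cast_one, one_mul] at h
    linear_combination -h
  refine eq_inv_of_mul_eq_one_left ?_
  calc altBinomialSum (fun j => ((j : K) + 1)⁻¹) m * ((m : K) + 1)
      = ∑ j ∈ range (m + 1), (-1 : K) ^ j * (m + 1).choose (j + 1) := by
        rw [altBinomialSum, sum_mul]
        exact sum_congr rfl fun j _ => by rw [← absorb]; ring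
    _ = 1 := by exact_mod_cast alt

theorem altBinomialSum_inv (m : ℕ) :
    altBinomialSum (fun j => (j : ℚ)⁻¹) m = -harmonic m := by
  induction m with
  | zero => simp [altBinomialSum]
  | succ m ih =>
    rw [altBinomialSum_succ, altBinomialSum_sub, ih]
    simp only [Nat.cast_add_one, altBinomialSum_inv_add_one, harmonic_succ]
    ring

theorem altBinomialSum_harmonic_pred (m : ℕ) :
    altBinomialSum (fun j => harmonic (j - 1)) (m + 1) = harmonic m := by
  -- at `j = 0` both sides vanish, since `0 - 1 = 0` in `ℕ` and `(0 : ℚ)⁻¹ = 0`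
  have harmonic_pred_sub (j : ℕ) : harmonic (j - 1) - harmonic j = -(j : ℚ)⁻¹ := by
    cases j <;> simp
  rw [altBinomialSum_succ]
  simp only [Nat.add_sub_cancel, harmonic_pred_sub, altBinomialSum_neg, altBinomialSum_inv,
    neg_neg]

theorem alternating_binomial_sum_harmonic_parity_general (n : ℕ) :
    ∑ i ∈ Finset.Icc 1 (n - 1),
        (-1 : ℚ) ^ (i + 1) * (Nat.choose (n + 1) (i + 1) : ℚ) * harmonic i =
      if Even n then 2 * harmonic n else 0 := by
  set S := ∑ i ∈ Finset.Icc 1 (n - 1),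
    (-1 : ℚ) ^ (i + 1) * (Nat.choose (n + 1) (i + 1) : ℚ) * harmonic i with hS
  have hsplit : altBinomialSum (fun j => harmonic (j - 1)) (n + 1) =
      S + (-1) ^ (n + 1) * harmonic n := by
    rw [altBinomialSum, sum_range_succ, sum_range_succ']
    simp only [Nat.add_sub_cancel, zero_tsub, harmonic_zero, mul_zero, add_zero, Nat.choose_self,
      Nat.cast_one, mul_one, hS]
    congr 1
    refine (sum_subset (fun i hi => ?_) fun i hi_range hi_Icc => ?_).symm
    · simp only [mem_Icc, mem_range] at hi ⊢; omega
    · obtain rfl : i = 0 := by simp only [mem_Icc, mem_range] at hi_range hi_Icc; omega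
      simp
  have hS_closed : S = (1 + (-1) ^ n) * harmonic n := by
    rw [altBinomialSum_harmonic_pred] at hsplit
    linear_combination -hsplit
  rcases Nat.even_or_odd n with h | h
  · rw [hS_closed, h.neg_one_pow, if_pos h]; ring
  · rw [hS_closed, h.neg_one_pow, if_neg (Nat.not_even_iff_odd.mpr h)]; ring

theorem alternating_binomial_sum_harmonic_parity (n : ℕ) (hn : 2 ≤ n) :
    ∑ i ∈ Finset.Icc 1 (n - 1),
        (-1 : ℚ) ^ (i + 1) * (Nat.choose (n + 1) (i + 1) : ℚ) * harmonic i =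
      if Even n then 2 * harmonic n else 0 :=
  alternating_binomial_sum_harmonic_parity_general n
end
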